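/- Let g be continuous on the closed unit disk and let w = G[g]. Then for all z₁, z₂ ∈ 𝔻, |w(z₁) − w(z₂)| ≤ (23/3)‖g‖_∞ |z₁ − z₂|; that is, w is Lipschitz continuous in 𝔻 with constant (23/3)‖g‖_∞. -/

import Mathlib

open MeasureTheory Complex Metric

/-- The Wirtinger derivative `∂p/∂z = (p_x - i p_y)/2` of a function `p : ℂ → ℂ`. -/
noncomputable def wderiv (p : ℂ → ℂ) (z : ℂ) : ℂ :=
  (fderiv ℝ p z 1 - Complex.I * fderiv ℝ p z Complex.I) / 2

/-- The Wirtinger derivative `∂p/∂z̄ = (p_x + i p_y)/2` of a function `p : ℂ → ℂ`. -/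
noncomputable def wderivBar (p : ℂ → ℂ) (z : ℂ) : ℂ :=
  (fderiv ℝ p z 1 + Complex.I * fderiv ℝ p z Complex.I) / 2

/-- The normalized area measure `dA = (1/π) dx dy` on the unit disk. -/
noncomputable def dA : Measure ℂ :=
  ENNReal.ofReal (1 / Real.pi) • volume.restrict (ball (0 : ℂ) 1)

/-- The biharmonic Green function of the unit disk. -/
noncomputable def Gker (z ζ : ℂ) : ℝ :=
  ‖z - ζ‖ ^ 2 * Real.log (‖(1 - (starRingEnd ℂ) ζ * z) / (z - ζ)‖ ^ 2)
    - (1 - ‖z‖ ^ 2) * (1 - ‖ζ‖ ^ 2)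

/-- The Wirtinger derivative of the biharmonic Green function in its first variable. -/
noncomputable def Gz (z ζ : ℂ) : ℂ :=
  ((starRingEnd ℂ) z - (starRingEnd ℂ) ζ) *
      ((Real.log (‖(z - ζ) / (1 - (starRingEnd ℂ) ζ * z)‖ ^ 2) : ℝ) : ℂ)
    + ((starRingEnd ℂ) z - (starRingEnd ℂ) ζ) * ((1 - ‖ζ‖ ^ 2 : ℝ) : ℂ) /
        (1 - (starRingEnd ℂ) ζ * z)
    - (starRingEnd ℂ) z * ((1 - ‖ζ‖ ^ 2 : ℝ) : ℂ)

/-- The kernel `H₀(z) = (1/2)(1-|z|²)²/|1-z|²`. -/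
noncomputable def H0 (z : ℂ) : ℝ :=
  (1 - ‖z‖ ^ 2) ^ 2 / (2 * ‖1 - z‖ ^ 2)

/-- The biharmonic Poisson kernel `F₀(z) = H₀(z) + (1/2)(1-|z|²)³/|1-z|⁴`. -/
noncomputable def F0 (z : ℂ) : ℝ :=
  H0 z + (1 - ‖z‖ ^ 2) ^ 3 / (2 * ‖1 - z‖ ^ 4)

/-- `F₀[f](z) = (1/(2π)) ∫₀^{2π} F₀(z e^{-iθ}) f(e^{iθ}) dθ`. -/
noncomputable def F0int (f : ℂ → ℂ) (z : ℂ) : ℂ :=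
  (1 / (2 * (Real.pi : ℂ))) * ∫ θ in (0:ℝ)..(2 * Real.pi),
    ((F0 (z * Complex.exp (-(θ : ℂ) * Complex.I)) : ℝ) : ℂ) * f (Complex.exp ((θ : ℂ) * Complex.I))

/-- `H₀[h](z) = (1/(2π)) ∫₀^{2π} H₀(z e^{-iθ}) h(e^{iθ}) dθ`. -/
noncomputable def H0int (h : ℂ → ℂ) (z : ℂ) : ℂ :=
  (1 / (2 * (Real.pi : ℂ))) * ∫ θ in (0:ℝ)..(2 * Real.pi),
    ((H0 (z * Complex.exp (-(θ : ℂ) * Complex.I)) : ℝ) : ℂ) * h (Complex.exp ((θ : ℂ) * Complex.I))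

/-- `G[g](z) = ∫_𝔻 G(z,ζ) g(ζ) dA(ζ)`. -/
noncomputable def Gint (g : ℂ → ℂ) (z : ℂ) : ℂ :=
  ∫ ζ, ((Gker z ζ : ℝ) : ℂ) * g ζ ∂dA

/-- The sup of `|g|` over a set `s`. -/
noncomputable def supAbsOn (g : ℂ → ℂ) (s : Set ℂ) : ℝ :=
  sSup ((fun z => ‖g z‖) '' s)

/-- The Laplacian `Δ = (1/4)(∂²/∂x² + ∂²/∂y²)`. -/
noncomputable def lap (w : ℂ → ℂ) (z : ℂ) : ℂ :=
  (fderiv ℝ (fun x => fderiv ℝ w x 1) z 1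
    + fderiv ℝ (fun x => fderiv ℝ w x Complex.I) z Complex.I) / 4

/-!
For fixed `ζ ∈ 𝔻`, write `D = z - ζ` and `N = 1 - ζ̄ z`. Away from `z = ζ` the function
`z ↦ G(z, ζ) = |D|² log (|N|²/|D|²) - (1 - |z|²)(1 - |ζ|²)` is smooth, with gradient
`2 ∂G/∂z̄ = 2 D (log (|N|²/|D|²) - (1 - |ζ|²)/N̄) + 2 z (1 - |ζ|²)`.
On the disk `|D| ≤ |N| ≤ 2`, and `t log (s/t) ≤ s/e`, so this gradient has modulus at most
`8/e + 2 + 2 < 7`. For every `ζ` off the segment `[z₁, z₂]`, a null set, the mean value theorem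
gives `|G(z₁, ζ) - G(z₂, ζ)| ≤ 7 |z₁ - z₂|`; integrating against `g` for the probability
measure `dA` yields the Lipschitz bound with constant `7 ‖g‖_∞ ≤ (23/3) ‖g‖_∞`.
-/

open scoped ComplexConjugate Topology

theorem Real.mul_log_div_le_div_exp_one {a b : ℝ} (ha : 0 ≤ a) (hb : 0 ≤ b) :
    a * Real.log (b / a) ≤ b / Real.exp 1 := by
  rcases ha.eq_or_lt with rfl | ha
  · simp only [zero_mul]; positivity
  rcases hb.eq_or_lt with rfl | hb
  · simp
  have h := Real.exp_one_mul_le_exp (x := Real.log (b / a))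
  rw [Real.exp_log (div_pos hb ha)] at h
  rw [le_div_iff₀ (Real.exp_pos 1)]
  calc a * Real.log (b / a) * Real.exp 1 = a * (Real.exp 1 * Real.log (b / a)) := by ring
    _ ≤ a * (b / a) := by gcongr
    _ = b := by field_simp

theorem MeasureTheory.Measure.addHaar_segment {E : Type*} [NormedAddCommGroup E]
    [NormedSpace ℝ E] [MeasurableSpace E] [BorelSpace E] [FiniteDimensional ℝ E]
    (μ : Measure E) [μ.IsAddHaarMeasure] (hE : 1 < Module.finrank ℝ E) (x y : E) :
    μ (segment ℝ x y) = 0 := by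
  refine measure_mono_null ?_ (Measure.addHaar_affineSubspace μ (affineSpan ℝ {x, y}) ?_)
  · rw [← convexHull_pair]
    exact convexHull_subset_affineSpan _
  · intro htop
    have hrank : Module.finrank ℝ (vectorSpan ℝ ({x, y} : Set E)) ≤ 1 := by
      rw [vectorSpan_pair]
      simpa using finrank_span_le_card ({x -ᵥ y} : Set E)
    rw [← direction_affineSpan, htop, AffineSubspace.direction_top, finrank_top] at hrank
    omega

theorem MeasureTheory.norm_integral_ofReal_mul_sub_le {α : Type*} [MeasurableSpace α]
    {μ : Measure α} [IsProbabilityMeasure μ] {k₁ k₂ : α → ℝ} {g : α → ℂ} {L M : ℝ}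
    (h₁ : Integrable (fun x => (k₁ x : ℂ) * g x) μ) (h₂ : Integrable (fun x => (k₂ x : ℂ) * g x) μ)
    (hk : ∀ᵐ x ∂μ, |k₁ x - k₂ x| ≤ L) (hg : ∀ᵐ x ∂μ, ‖g x‖ ≤ M) :
    ‖∫ x, (k₁ x : ℂ) * g x ∂μ - ∫ x, (k₂ x : ℂ) * g x ∂μ‖ ≤ L * M := by
  rw [← integral_sub h₁ h₂]
  have hbound : ∀ᵐ x ∂μ, ‖(k₁ x : ℂ) * g x - (k₂ x : ℂ) * g x‖ ≤ L * M := by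
    filter_upwards [hk, hg] with x hkx hgx
    rw [← sub_mul, ← Complex.ofReal_sub, norm_mul, Complex.norm_real, Real.norm_eq_abs]
    exact mul_le_mul hkx hgx (norm_nonneg _) ((abs_nonneg _).trans hkx)
  simpa using norm_integral_le_of_norm_le_const hbound

theorem norm_le_supAbsOn {g : ℂ → ℂ} {s t : Set ℂ} (hg : ContinuousOn g t) (ht : IsCompact t)
    (hst : s ⊆ t) {x : ℂ} (hx : x ∈ s) : ‖g x‖ ≤ supAbsOn g s :=
  le_csSup ((ht.image_of_continuousOn hg.norm).bddAbove.mono (Set.image_mono hst))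
    (Set.mem_image_of_mem _ hx)

instance isProbabilityMeasure_dA : IsProbabilityMeasure dA := by
  constructor
  rw [dA, Measure.smul_apply, Measure.restrict_apply_univ, Complex.volume_ball, smul_eq_mul,
    ENNReal.ofReal_one, one_pow, one_mul, ← ENNReal.ofReal_coe_nnreal, NNReal.coe_real_pi,
    ← ENNReal.ofReal_mul (by positivity), one_div, inv_mul_cancel₀ Real.pi_ne_zero,
    ENNReal.ofReal_one]

theorem dA_absolutelyContinuous : dA ≪ volume :=
  Measure.smul_absolutelyContinuous.trans Measure.restrict_le_self.absolutelyContinuous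

theorem ae_dA_mem_ball : ∀ᵐ ζ ∂dA, ζ ∈ ball (0 : ℂ) 1 :=
  Measure.ae_smul_measure (ae_restrict_mem measurableSet_ball) _

theorem ae_dA_notMem_segment (z₁ z₂ : ℂ) : ∀ᵐ ζ ∂dA, ζ ∉ segment ℝ z₁ z₂ :=
  dA_absolutelyContinuous.ae_le <| measure_eq_zero_iff_ae_notMem.mp <|
    Measure.addHaar_segment volume (by simp) z₁ z₂

section Kernel

theorem norm_one_sub_conj_mul_sq_sub_norm_sub_sq (z ζ : ℂ) :
    ‖1 - conj ζ * z‖ ^ 2 - ‖z - ζ‖ ^ 2 = (1 - ‖z‖ ^ 2) * (1 - ‖ζ‖ ^ 2) := by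
  simp only [Complex.sq_norm, Complex.normSq_apply, Complex.sub_re, Complex.sub_im,
    Complex.mul_re, Complex.mul_im, Complex.one_re, Complex.one_im, Complex.conj_re,
    Complex.conj_im]
  ring

variable {z ζ : ℂ}

theorem norm_sub_le_norm_one_sub_conj_mul (hz : ‖z‖ ≤ 1) (hζ : ‖ζ‖ ≤ 1) :
    ‖z - ζ‖ ≤ ‖1 - conj ζ * z‖ := by
  have h := norm_one_sub_conj_mul_sq_sub_norm_sub_sq z ζ
  have hz2 : ‖z‖ ^ 2 ≤ 1 := pow_le_one₀ (norm_nonneg z) hz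
  have hζ2 : ‖ζ‖ ^ 2 ≤ 1 := pow_le_one₀ (norm_nonneg ζ) hζ
  exact (sq_le_sq₀ (norm_nonneg _) (norm_nonneg _)).mp (by nlinarith)

theorem norm_one_sub_conj_mul_le_two (hz : ‖z‖ ≤ 1) (hζ : ‖ζ‖ ≤ 1) :
    ‖1 - conj ζ * z‖ ≤ 2 := by
  calc ‖1 - conj ζ * z‖ ≤ ‖(1 : ℂ)‖ + ‖ζ‖ * ‖z‖ := by
        simpa only [norm_mul, Complex.norm_conj] using norm_sub_le (1 : ℂ) (conj ζ * z)
    _ ≤ 2 := by rw [norm_one]; nlinarith [norm_nonneg z, norm_nonneg ζ]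

theorem one_sub_conj_mul_ne_zero (hz : ‖z‖ < 1) (hζ : ‖ζ‖ ≤ 1) : 1 - conj ζ * z ≠ 0 := by
  intro h
  have h1 : ‖conj ζ * z‖ = 1 := by rw [← sub_eq_zero.mp h, norm_one]
  rw [norm_mul, Complex.norm_conj] at h1
  nlinarith [norm_nonneg z, norm_nonneg ζ]

theorem Gker_eq_mul_log_sub_log (hD : z ≠ ζ) (hN : 1 - conj ζ * z ≠ 0) :
    Gker z ζ = ‖z - ζ‖ ^ 2 * (Real.log (‖1 - conj ζ * z‖ ^ 2) - Real.log (‖z - ζ‖ ^ 2))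
      - (1 - ‖z‖ ^ 2) * (1 - ‖ζ‖ ^ 2) := by
  rw [Gker, norm_div, div_pow, Real.log_div (by simpa using hN) (by simpa [sub_eq_zero] using hD)]

theorem abs_Gker_le (hz : ‖z‖ < 1) (hζ : ‖ζ‖ < 1) : |Gker z ζ| ≤ 2 := by
  have hz2 : ‖z‖ ^ 2 < 1 := pow_lt_one₀ (norm_nonneg z) hz two_ne_zero
  have hζ2 : ‖ζ‖ ^ 2 < 1 := pow_lt_one₀ (norm_nonneg ζ) hζ two_ne_zero
  have hprod_nonneg : 0 ≤ (1 - ‖z‖ ^ 2) * (1 - ‖ζ‖ ^ 2) := by nlinarith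
  have hprod_le : (1 - ‖z‖ ^ 2) * (1 - ‖ζ‖ ^ 2) ≤ 1 := by nlinarith [sq_nonneg ‖z‖, sq_nonneg ‖ζ‖]
  have hDN := norm_sub_le_norm_one_sub_conj_mul hz.le hζ.le
  have hN2 := norm_one_sub_conj_mul_le_two hz.le hζ.le
  have hlog_nonneg : 0 ≤ ‖z - ζ‖ ^ 2 * Real.log (‖(1 - conj ζ * z) / (z - ζ)‖ ^ 2) := by
    rcases eq_or_ne z ζ with rfl | hne
    · simp
    refine mul_nonneg (sq_nonneg _) (Real.log_nonneg ?_)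
    rw [norm_div, div_pow, one_le_div (pow_pos (norm_pos_iff.mpr (sub_ne_zero.mpr hne)) 2)]
    gcongr
  have hlog_le : ‖z - ζ‖ ^ 2 * Real.log (‖(1 - conj ζ * z) / (z - ζ)‖ ^ 2) ≤ 2 := by
    rw [norm_div, div_pow]
    refine (Real.mul_log_div_le_div_exp_one (sq_nonneg _) (sq_nonneg _)).trans ?_
    rw [div_le_iff₀ (Real.exp_pos 1)]
    nlinarith [Real.exp_one_gt_d9, norm_nonneg (1 - conj ζ * z)]
  rw [Gker, abs_le]
  constructor <;> linarith

-- `2 ∂G/∂z̄`, with `(1 - |ζ|²) / N̄` written as `(1 - |ζ|²) / |N|² * N`.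
noncomputable def gradGker (z ζ : ℂ) : ℂ :=
  2 * (z - ζ) * (Real.log (‖(1 - conj ζ * z) / (z - ζ)‖ ^ 2)
      - ((1 - ‖ζ‖ ^ 2) / ‖1 - conj ζ * z‖ ^ 2 : ℝ) * (1 - conj ζ * z))
    + 2 * z * (1 - ‖ζ‖ ^ 2 : ℝ)

theorem hasGradientAt_Gker (hD : z ≠ ζ) (hN : 1 - conj ζ * z ≠ 0) :
    HasGradientAt (Gker · ζ) (gradGker z ζ) z := by
  have hD' : ‖z - ζ‖ ^ 2 ≠ 0 := by simpa [sub_eq_zero] using hD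
  have hN' : ‖1 - conj ζ * z‖ ^ 2 ≠ 0 := by simpa using hN
  have hA : HasFDerivAt (‖· - ζ‖ ^ 2) (2 • innerSL ℝ (z - ζ)) z := by
    simpa using ((hasFDerivAt_id z).sub_const ζ).norm_sq
  have hB := (((hasFDerivAt_id z).const_mul (conj ζ)).const_sub 1).norm_sq
  have hC : HasFDerivAt (‖·‖ ^ 2) (2 • innerSL ℝ z) z := by
    simpa using (hasFDerivAt_id z).norm_sq
  have hsplit := (hA.mul ((hB.log hN').sub (hA.log hD'))).sub
    (((hasFDerivAt_const 1 z).sub hC).mul_const (1 - ‖ζ‖ ^ 2))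
  have hev : (Gker · ζ) =ᶠ[𝓝 z] fun w =>
      ‖w - ζ‖ ^ 2 * (Real.log (‖1 - conj ζ * w‖ ^ 2) - Real.log (‖w - ζ‖ ^ 2))
        - (1 - ‖w‖ ^ 2) * (1 - ‖ζ‖ ^ 2) := by
    have hNcont : Continuous fun w : ℂ => 1 - conj ζ * w := by fun_prop
    filter_upwards [eventually_ne_nhds hD, hNcont.continuousAt.eventually_ne hN] with w hw hNw
    exact Gker_eq_mul_log_sub_log hw hNw
  refine (hsplit.congr_fderiv (ContinuousLinearMap.ext fun v => ?_)).congr_of_eventuallyEq hev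
  simp only [gradGker, norm_div, div_pow, Real.log_div hN' hD', sub_apply,
    add_apply, smul_apply, ContinuousLinearMap.coe_comp, Function.comp_apply, innerSL_apply_apply,
    neg_apply, ContinuousLinearMap.coe_id', id_eq, zero_apply,
    InnerProductSpace.toDual_apply_apply, Complex.inner, Pi.sub_apply, smul_eq_mul, nsmul_eq_mul,
    Nat.cast_ofNat]
  generalize Real.log (‖1 - conj ζ * z‖ ^ 2) - Real.log (‖z - ζ‖ ^ 2) = L
  generalize hn : ‖1 - conj ζ * z‖ ^ 2 = n at hN' ⊢
  generalize hd : ‖z - ζ‖ ^ 2 = d at hD' ⊢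
  simp only [Complex.mul_re, Complex.mul_im, Complex.sub_re, Complex.sub_im, Complex.add_re,
    Complex.add_im, Complex.conj_re, Complex.conj_im, Complex.one_re, Complex.one_im,
    Complex.ofReal_re, Complex.ofReal_im, Complex.neg_re, Complex.neg_im, Complex.re_ofNat,
    Complex.im_ofNat]
  field_simp
  subst hn hd
  simp only [Complex.sq_norm, Complex.normSq_apply, Complex.mul_re, Complex.mul_im,
    Complex.sub_re, Complex.sub_im, Complex.conj_re, Complex.conj_im, Complex.one_re,
    Complex.one_im]
  ring

theorem norm_gradGker_le (hz : ‖z‖ < 1) (hζ : ‖ζ‖ < 1) (hD : z ≠ ζ) : ‖gradGker z ζ‖ ≤ 7 := by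
  set a := ‖z - ζ‖
  set b := ‖1 - conj ζ * z‖
  set c := 1 - ‖ζ‖ ^ 2
  have ha : 0 < a := norm_pos_iff.mpr (sub_ne_zero.mpr hD)
  have hab : a ≤ b := norm_sub_le_norm_one_sub_conj_mul hz.le hζ.le
  have hb2 : b ≤ 2 := norm_one_sub_conj_mul_le_two hz.le hζ.le
  have hb : 0 < b := ha.trans_le hab
  have hc₀ : 0 ≤ c := by nlinarith [norm_nonneg ζ]
  have hc₁ : c ≤ 1 := by nlinarith [norm_nonneg ζ]
  have hab' : a / b ≤ 1 := div_le_one_of_le₀ hab hb.le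
  have hL : Real.log (‖(1 - conj ζ * z) / (z - ζ)‖ ^ 2) = 2 * Real.log (b / a) := by
    rw [norm_div, Real.log_pow, Nat.cast_ofNat]
  have hlog_nonneg : 0 ≤ Real.log (b / a) := Real.log_nonneg ((one_le_div ha).mpr hab)
  have hlog_le : a * Real.log (b / a) ≤ 3 / 4 := by
    refine (Real.mul_log_div_le_div_exp_one ha.le (ha.le.trans hab)).trans ?_
    rw [div_le_iff₀ (Real.exp_pos 1)]
    nlinarith [Real.exp_one_gt_d9]
  have hfirst : ‖Real.log (‖(1 - conj ζ * z) / (z - ζ)‖ ^ 2) - (c / b ^ 2 : ℝ) * (1 - conj ζ * z)‖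
      ≤ 2 * Real.log (b / a) + c / b := by
    refine (norm_sub_le _ _).trans (le_of_eq ?_)
    rw [hL, norm_mul, Complex.norm_real, Complex.norm_real, Real.norm_of_nonneg (by positivity),
      Real.norm_of_nonneg (div_nonneg hc₀ (sq_nonneg b))]
    change _ + c / b ^ 2 * b = _
    field_simp
  calc ‖gradGker z ζ‖
      ≤ 2 * a * (2 * Real.log (b / a) + c / b) + 2 * ‖z‖ * c := by
        refine (norm_add_le _ _).trans (add_le_add ?_ (le_of_eq ?_))
        · rw [norm_mul, norm_mul, Complex.norm_ofNat]
          gcongr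
        · rw [norm_mul, norm_mul, Complex.norm_ofNat, Complex.norm_real,
            Real.norm_of_nonneg hc₀]
    _ = 4 * (a * Real.log (b / a)) + 2 * c * (a / b) + 2 * ‖z‖ * c := by ring
    _ ≤ 4 * (3 / 4) + 2 * 1 * 1 + 2 * 1 * 1 := by gcongr
    _ = 7 := by norm_num

theorem abs_Gker_sub_le {z₁ z₂ : ℂ} (hz₁ : z₁ ∈ ball (0 : ℂ) 1) (hz₂ : z₂ ∈ ball (0 : ℂ) 1)
    (hζ : ζ ∈ ball (0 : ℂ) 1) (hseg : ζ ∉ segment ℝ z₁ z₂) :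
    |Gker z₁ ζ - Gker z₂ ζ| ≤ 7 * ‖z₁ - z₂‖ := by
  have hsub : segment ℝ z₁ z₂ ⊆ ball (0 : ℂ) 1 := (convex_ball 0 1).segment_subset hz₁ hz₂
  rw [mem_ball_zero_iff] at hζ
  have hne : ∀ w ∈ segment ℝ z₁ z₂, w ≠ ζ := fun w hw h => hseg (h ▸ hw)
  refine (convex_segment z₁ z₂).norm_image_sub_le_of_norm_hasFDerivWithin_le (𝕜 := ℝ)
    (f := (Gker · ζ)) (f' := fun w => InnerProductSpace.toDual ℝ ℂ (gradGker w ζ))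
    (fun w hw => ?_) (fun w hw => ?_) (right_mem_segment ℝ z₁ z₂) (left_mem_segment ℝ z₁ z₂)
  · exact (hasGradientAt_Gker (hne w hw) (one_sub_conj_mul_ne_zero
      (mem_ball_zero_iff.mp (hsub hw)) hζ.le)).hasFDerivAt.hasFDerivWithinAt
  · rw [LinearIsometryEquiv.norm_map]
    exact norm_gradGker_le (mem_ball_zero_iff.mp (hsub hw)) hζ (hne w hw)

theorem integrable_Gker_mul {g : ℂ → ℂ} (hg : ContinuousOn g (closedBall (0 : ℂ) 1))
    (hz : z ∈ ball (0 : ℂ) 1) : Integrable (fun ζ => (Gker z ζ : ℂ) * g ζ) dA := by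
  obtain ⟨C, hC⟩ := (isCompact_closedBall (0 : ℂ) 1).exists_bound_of_continuousOn hg
  have hmeas : Measurable (Gker z) := by unfold Gker; fun_prop
  have hg_meas : AEStronglyMeasurable g dA :=
    ((hg.mono ball_subset_closedBall).aestronglyMeasurable measurableSet_ball).smul_measure _
  refine Integrable.mono' (integrable_const (2 * C))
    ((Complex.measurable_ofReal.comp hmeas).aestronglyMeasurable.mul hg_meas) ?_
  filter_upwards [ae_dA_mem_ball] with ζ hζ
  rw [norm_mul, Complex.norm_real, Real.norm_eq_abs]
  exact mul_le_mul (abs_Gker_le (mem_ball_zero_iff.mp hz) (mem_ball_zero_iff.mp hζ))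
    (hC ζ (ball_subset_closedBall hζ)) (norm_nonneg _) zero_le_two

end Kernel

/-- For `g` continuous on the closed unit disk, `w = G[g]` is Lipschitz on `𝔻`
with constant `(23/3)‖g‖_∞`. -/
theorem lipschitz_Gint (g : ℂ → ℂ) (hg : ContinuousOn g (closedBall (0 : ℂ) 1))
    (z₁ : ℂ) (hz₁ : z₁ ∈ ball (0 : ℂ) 1) (z₂ : ℂ) (hz₂ : z₂ ∈ ball (0 : ℂ) 1) :
    ‖Gint g z₁ - Gint g z₂‖ ≤
      (23 / 3) * supAbsOn g (ball (0 : ℂ) 1) * ‖z₁ - z₂‖ := by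
  set M := supAbsOn g (ball (0 : ℂ) 1)
  have hM : ∀ x ∈ ball (0 : ℂ) 1, ‖g x‖ ≤ M := fun x hx =>
    norm_le_supAbsOn hg (isCompact_closedBall 0 1) ball_subset_closedBall hx
  have hM₀ : 0 ≤ M := (norm_nonneg _).trans (hM 0 (mem_ball_self one_pos))
  have hlip : ∀ᵐ ζ ∂dA, |Gker z₁ ζ - Gker z₂ ζ| ≤ 7 * ‖z₁ - z₂‖ := by
    filter_upwards [ae_dA_mem_ball, ae_dA_notMem_segment z₁ z₂] with ζ hζ hseg
    exact abs_Gker_sub_le hz₁ hz₂ hζ hseg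
  have hgM : ∀ᵐ ζ ∂dA, ‖g ζ‖ ≤ M := by
    filter_upwards [ae_dA_mem_ball] with ζ hζ using hM ζ hζ
  calc ‖Gint g z₁ - Gint g z₂‖ ≤ 7 * ‖z₁ - z₂‖ * M :=
        norm_integral_ofReal_mul_sub_le (integrable_Gker_mul hg hz₁)
          (integrable_Gker_mul hg hz₂) hlip hgM
    _ ≤ 23 / 3 * M * ‖z₁ - z₂‖ := by nlinarith [norm_nonneg (z₁ - z₂)]
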